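/- Let X be an ergodic Markov chain on a finite state space with stationary distribution π(y) ≥ ρ/M for all y and mixing time bound t_mix(ρ/(2M)) ≤ t. Then for any states x, y, the expected hitting time satisfies E_x[τ̄_y] ≤ (1 − exp(−ρ/(2Mt)))^{−1}, which is O(Mt/ρ). -/

import Mathlib

open MeasureTheory
open scoped ENNReal

noncomputable section

/-- First return time of the trajectory `ω` to the set `A`:
`τ̄_A(ω) = inf {t > 0 : ω t ∈ A}`, valued in `ℕ∞`. -/
def returnTime {S : Type*} (A : Set S) (ω : ℕ → S) : ℕ∞ :=
  sInf ((fun n : ℕ => (n : ℕ∞)) '' {n : ℕ | 0 < n ∧ ω n ∈ A})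

/-!
Kill the chain on entering `y`, i.e. replace the column `y` of `p` by zero. The row sums of the
`n`-th power of the killed matrix are the probabilities `P_x(τ̄_y > n)`. By the mixing bound every
row of `p ^ t` puts mass at least `π y - ρ/(2M) ≥ ρ/(2M) =: c` on `y`, so `t` steps of the killed
chain multiply the surviving mass by at most `1 - c`, and `P_x(τ̄_y > m) ≤ (1 - c) ^ ⌊m/t⌋`.
Summing this tail gives `E_x[τ̄_y] ≤ t / c`, and `t / c ≤ (1 - exp (-c/t))⁻¹` because
`1 - e^{-u} ≤ u`.
-/

open Finset Matrix

theorem ENat.toENNReal_eq_tsum_ite (k : ℕ∞) :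
    (k : ℝ≥0∞) = ∑' m : ℕ, if (m : ℕ∞) < k then 1 else 0 := by
  induction k using ENat.recTopCoe with
  | top => simp
  | coe k =>
    rw [tsum_eq_sum (s := range k) fun m hm => by simpa using hm]
    simp [Finset.sum_boole, Finset.filter_true_of_mem fun m hm => mem_range.mp hm]

theorem lintegral_le_tsum_measure_lt {α : Type*} [MeasurableSpace α] (μ : Measure α)
    (f : α → ℕ∞) : ∫⁻ a, (f a : ℝ≥0∞) ∂μ ≤ ∑' m : ℕ, μ {a | (m : ℕ∞) < f a} := by
  -- `f` need not be measurable: pass to measurable hulls of its superlevel sets.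
  set A : ℕ → Set α := fun m => toMeasurable μ {a | (m : ℕ∞) < f a}
  calc ∫⁻ a, (f a : ℝ≥0∞) ∂μ ≤ ∫⁻ a, ∑' m, (A m).indicator 1 a ∂μ := by
        refine lintegral_mono fun a => ?_
        rw [ENat.toENNReal_eq_tsum_ite]
        refine ENNReal.tsum_le_tsum fun m => ?_
        split_ifs with h
        · rw [Set.indicator_of_mem (subset_toMeasurable μ _ (Set.mem_ofPred.mpr h)), Pi.one_apply]
        · exact zero_le
    _ = ∑' m : ℕ, μ {a | (m : ℕ∞) < f a} := by
        rw [lintegral_tsum fun m =>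
          (measurable_one.indicator (measurableSet_toMeasurable _ _)).aemeasurable]
        simp [lintegral_indicator_one (measurableSet_toMeasurable _ _)]

theorem ENNReal.tsum_pow_div (r : ℝ≥0∞) {t : ℕ} (ht : t ≠ 0) :
    ∑' m : ℕ, r ^ (m / t) = t * (1 - r)⁻¹ := by
  have : NeZero t := ⟨ht⟩
  calc ∑' m : ℕ, r ^ (m / t) = ∑' c : ℕ × Fin t, r ^ c.1 :=
        (Nat.divModEquiv t).tsum_eq fun c => r ^ c.1
    _ = t * (1 - r)⁻¹ := by
        rw [ENNReal.tsum_prod (f := fun k (_ : Fin t) => r ^ k)]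
        simp [ENNReal.tsum_mul_left, ENNReal.tsum_geometric]

theorem Real.inv_le_inv_one_sub_exp_neg {u : ℝ} (hu : 0 < u) :
    u⁻¹ ≤ (1 - Real.exp (-u))⁻¹ := by
  have hpos : 0 < 1 - Real.exp (-u) := by
    linarith [Real.exp_lt_one_iff.mpr (neg_lt_zero.mpr hu)]
  exact inv_anti₀ hpos (by linarith [Real.one_sub_le_exp_neg u])

theorem tsum_ofReal_one_sub_pow_div_le {c : ℝ} (hc0 : 0 < c) (hc1 : c ≤ 1) {t : ℕ} (ht : t ≠ 0) :
    ∑' m : ℕ, ENNReal.ofReal (1 - c) ^ (m / t) ≤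
      ENNReal.ofReal ((1 - Real.exp (-(c / t)))⁻¹) := by
  rw [ENNReal.tsum_pow_div _ ht, ← ENNReal.ofReal_one, ← ENNReal.ofReal_sub _ (by linarith),
    sub_sub_cancel, ← ENNReal.ofReal_inv_of_pos hc0, ← ENNReal.ofReal_natCast,
    ← ENNReal.ofReal_mul (by positivity), ← div_eq_mul_inv, ← inv_div]
  exact ENNReal.ofReal_le_ofReal
    (Real.inv_le_inv_one_sub_exp_neg (div_pos hc0 (Nat.cast_pos.mpr (Nat.pos_of_ne_zero ht))))

theorem abs_sub_le_half_sum_abs_sub {ι : Type*} [Fintype ι] [DecidableEq ι] {f g : ι → ℝ}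
    (h : ∑ i, f i = ∑ i, g i) (j : ι) : |f j - g j| ≤ (1 / 2) * ∑ i, |f i - g i| := by
  have hrest : f j - g j = -∑ i ∈ univ.erase j, (f i - g i) := by
    rw [eq_neg_iff_add_eq_zero, Finset.add_sum_erase univ (fun i => f i - g i) (mem_univ j),
      Finset.sum_sub_distrib, h, sub_self]
  have := Finset.abs_sum_le_sum_abs (fun i => f i - g i) (univ.erase j)
  rw [← Finset.add_sum_erase univ (fun i => |f i - g i|) (mem_univ j), hrest, abs_neg]
  linarith

theorem le_of_half_sum_abs_sub_le {ι : Type*} [Fintype ι] [DecidableEq ι] {f g : ι → ℝ}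
    {ε : ℝ} (h : ∑ i, f i = ∑ i, g i) (hfg : (1 / 2) * ∑ i, |f i - g i| ≤ ε) {j : ι}
    (hg : 2 * ε ≤ g j) : ε ≤ f j := by
  linarith [(abs_le.mp ((abs_sub_le_half_sum_abs_sub h j).trans hfg)).1]

namespace Matrix

variable {n R : Type*}

def pathWeight [CommMonoid R] (A : Matrix n n R) {k : ℕ} (v : Fin (k + 1) → n) : R :=
  ∏ l : Fin k, A (v l.castSucc) (v l.succ)

theorem pathWeight_cons [CommMonoid R] (A : Matrix n n R) {k : ℕ} (a : n)
    (v : Fin (k + 1) → n) :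
    pathWeight A (Fin.cons a v : Fin (k + 1 + 1) → n) = A a (v 0) * pathWeight A v := by
  simp [pathWeight, Fin.prod_univ_succ]

theorem pathWeight_nonneg [CommSemiring R] [PartialOrder R] [IsOrderedRing R]
    {A : Matrix n n R} (hA : ∀ i j, 0 ≤ A i j) {k : ℕ} (v : Fin (k + 1) → n) :
    0 ≤ pathWeight A v :=
  Finset.prod_nonneg fun _ _ => hA _ _

section UpdateCol

variable [DecidableEq n]

theorem pathWeight_updateCol_zero [CommMonoidWithZero R] (A : Matrix n n R) (y : n) {k : ℕ}
    (v : Fin (k + 1) → n) :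
    pathWeight (A.updateCol y 0) v = if ∀ l : Fin k, v l.succ ≠ y then pathWeight A v else 0 := by
  unfold pathWeight
  convert Fintype.prod_ite_zero (p := fun l : Fin k => v l.succ ≠ y)
    (f := fun l => A (v l.castSucc) (v l.succ)) using 2 with l
  simp [updateCol_apply, ite_not]

variable [Zero R] [Preorder R] {A : Matrix n n R}

theorem updateCol_zero_apply_nonneg (hA : ∀ i j, 0 ≤ A i j) (y i j : n) :
    0 ≤ A.updateCol y 0 i j := by
  rw [updateCol_apply]
  split_ifs
  exacts [le_rfl, hA i j]

theorem updateCol_zero_apply_le (hA : ∀ i j, 0 ≤ A i j) (y i j : n) :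
    A.updateCol y 0 i j ≤ A i j := by
  rw [updateCol_apply]
  split_ifs
  exacts [hA i j, le_rfl]

end UpdateCol

variable [Fintype n] [DecidableEq n]

theorem pow_apply_eq_sum_pathWeight [CommSemiring R] (A : Matrix n n R) (k : ℕ) (i j : n) :
    (A ^ k) i j = ∑ v : Fin (k + 1) → n with v 0 = i ∧ v (Fin.last k) = j, pathWeight A v := by
  rw [Finset.sum_filter]
  induction k generalizing i with
  | zero =>
    rw [← (Equiv.funUnique (Fin 1) n).symm.sum_comp]
    simp [pathWeight, one_apply, ite_and]
  | succ k ih =>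
    rw [← (Fin.consEquiv fun _ => n).sum_comp, Fintype.sum_prod_type, pow_succ', mul_apply]
    simp only [ih, Finset.mul_sum, Fin.consEquiv, Equiv.coe_fn_mk, Fin.cons_zero, pathWeight_cons,
      ← Fin.succ_last, Fin.cons_succ, ite_and]
    rw [Finset.sum_comm]
    simp [Finset.sum_ite_eq, Finset.sum_ite_eq']

theorem sum_pow_apply_eq_sum_pathWeight [CommSemiring R] (A : Matrix n n R) (k : ℕ) (i : n) :
    ∑ j, (A ^ k) i j = ∑ v : Fin (k + 1) → n with v 0 = i, pathWeight A v := by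
  simp only [pow_apply_eq_sum_pathWeight, ← Finset.filter_filter]
  exact Finset.sum_fiberwise _ _ _

theorem pow_updateCol_zero_succ_apply_self [Semiring R] (A : Matrix n n R) (y : n) (k : ℕ)
    (i : n) : ((A.updateCol y 0) ^ (k + 1)) i y = 0 := by
  simp [pow_succ, mul_apply]

section OrderedSemiring

variable [Semiring R] [PartialOrder R] [IsOrderedRing R] {A B : Matrix n n R}

theorem pow_apply_le_pow_apply (hA : ∀ i j, 0 ≤ A i j) (hAB : ∀ i j, A i j ≤ B i j) (k : ℕ)
    (i j : n) : (A ^ k) i j ≤ (B ^ k) i j := by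
  have hB : ∀ i j, 0 ≤ B i j := fun i j => (hA i j).trans (hAB i j)
  induction k generalizing j with
  | zero => rfl
  | succ k ih =>
    simp only [pow_succ, mul_apply]
    exact Finset.sum_le_sum fun l _ =>
      mul_le_mul (ih l) (hAB l j) (hA l j) (pow_apply_nonneg hB k i l)

theorem sum_pow_apply_le_pow (hA : ∀ i j, 0 ≤ A i j) {r : R} (hr : ∀ i, ∑ j, A i j ≤ r)
    (k : ℕ) (i : n) : ∑ j, (A ^ k) i j ≤ r ^ k := by
  induction k generalizing i with
  | zero => simp [one_apply]
  | succ k ih =>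
    have hr0 : 0 ≤ r := (Finset.sum_nonneg fun j _ => hA i j).trans (hr i)
    calc ∑ j, (A ^ (k + 1)) i j = ∑ l, A i l * ∑ j, (A ^ k) l j := by
          simp only [pow_succ', mul_apply, Finset.mul_sum]
          exact Finset.sum_comm
      _ ≤ ∑ l, A i l * r ^ k :=
          Finset.sum_le_sum fun l _ => mul_le_mul_of_nonneg_left (ih l) (hA i l)
      _ = (∑ l, A i l) * r ^ k := (Finset.sum_mul ..).symm
      _ ≤ r ^ (k + 1) := by
          rw [pow_succ']
          exact mul_le_mul_of_nonneg_right (hr i) (pow_nonneg hr0 k)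

end OrderedSemiring

variable [Ring R] [PartialOrder R] [IsOrderedRing R] {A : Matrix n n R}

theorem sum_pow_updateCol_zero_apply_le (hA : A ∈ rowStochastic R n) (y : n) {k : ℕ}
    (hk : k ≠ 0) (i : n) : ∑ j, ((A.updateCol y 0) ^ k) i j ≤ 1 - (A ^ k) i y := by
  obtain ⟨k, rfl⟩ := Nat.exists_eq_succ_of_ne_zero hk
  have hA0 : ∀ i j, 0 ≤ A i j := fun _ _ => nonneg_of_mem_rowStochastic hA
  calc ∑ j, ((A.updateCol y 0) ^ (k + 1)) i j
      = ∑ j ∈ univ.erase y, ((A.updateCol y 0) ^ (k + 1)) i j :=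
        (Finset.sum_erase _ (pow_updateCol_zero_succ_apply_self A y k i)).symm
    _ ≤ ∑ j ∈ univ.erase y, (A ^ (k + 1)) i j := Finset.sum_le_sum fun j _ =>
        pow_apply_le_pow_apply (updateCol_zero_apply_nonneg hA0 y)
          (updateCol_zero_apply_le hA0 y) _ i j
    _ = 1 - (A ^ (k + 1)) i y := by
        rw [Finset.sum_erase_eq_sub (mem_univ y),
          sum_row_of_mem_rowStochastic (pow_mem hA (k + 1))]

theorem sum_updateCol_zero_pow_mul_apply_le (hA : A ∈ rowStochastic R n) {y : n} {t : ℕ}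
    {c : R} (hc : ∀ i, c ≤ (A ^ t) i y) (ht : t ≠ 0) (k : ℕ) (i : n) :
    ∑ j, ((A.updateCol y 0) ^ (t * k)) i j ≤ (1 - c) ^ k := by
  have hA0 : ∀ i j, 0 ≤ A i j := fun _ _ => nonneg_of_mem_rowStochastic hA
  rw [pow_mul]
  refine sum_pow_apply_le_pow (pow_apply_nonneg (updateCol_zero_apply_nonneg hA0 y) t)
    (fun i => ?_) k i
  exact (sum_pow_updateCol_zero_apply_le hA y ht i).trans (sub_le_sub_left (hc i) 1)

end Matrix

theorem returnTime_le {S : Type*} {A : Set S} {ω : ℕ → S} {n : ℕ} (hn : 0 < n)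
    (h : ω n ∈ A) : returnTime A ω ≤ n :=
  sInf_le ⟨n, ⟨hn, h⟩, rfl⟩

section MarkovChainLaw

variable {S : Type*} [DecidableEq S] [MeasurableSpace S]

def IsMarkovChainLaw (μ : Measure (ℕ → S)) (p : Matrix S S ℝ) (x : S) : Prop :=
  ∀ (γ : ℕ → S) (n : ℕ), μ {ω | ∀ i ≤ n, ω i = γ i} =
    if γ 0 = x then ENNReal.ofReal (∏ i ∈ Finset.range n, p (γ i) (γ (i + 1))) else 0

variable {μ : Measure (ℕ → S)} {p : Matrix S S ℝ} {x : S}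

theorem IsMarkovChainLaw.measure_cylinder_eq (hμ : IsMarkovChainLaw μ p x) {n : ℕ}
    (v : Fin (n + 1) → S) :
    μ {ω | (fun i : Fin (n + 1) => ω i) = v} =
      ENNReal.ofReal (if v 0 = x then pathWeight p v else 0) := by
  set γ : ℕ → S := fun i => if h : i < n + 1 then v ⟨i, h⟩ else v 0
  have hγ : ∀ i : Fin (n + 1), γ i = v i := fun i => dif_pos i.isLt
  have hset : {ω : ℕ → S | (fun i : Fin (n + 1) => ω i) = v} = {ω | ∀ i ≤ n, ω i = γ i} := by
    ext ω
    refine ⟨fun h i hi => ?_, fun h => funext fun i => ?_⟩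
    · rw [hγ ⟨i, Nat.lt_succ_of_le hi⟩, ← h]
    · rw [h i (Nat.le_of_lt_succ i.isLt), hγ]
  have h0 : γ 0 = v 0 := by simpa using hγ 0
  rw [hset, hμ, h0]
  split_ifs
  · refine congrArg ENNReal.ofReal
      ((Fin.prod_univ_eq_prod_range (fun i => p (γ i) (γ (i + 1))) n).symm.trans ?_)
    exact Finset.prod_congr rfl fun l _ =>
      congrArg₂ (fun a b => p a b) (hγ l.castSucc) (hγ l.succ)
  · simp

variable [Fintype S]

theorem IsMarkovChainLaw.measure_eq [IsProbabilityMeasure μ] (hμ : IsMarkovChainLaw μ p x)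
    (hp : p ∈ rowStochastic ℝ S) {n : ℕ} (Q : (Fin (n + 1) → S) → Prop) [DecidablePred Q] :
    μ {ω | Q (fun i => ω i)} = ENNReal.ofReal (∑ v with v 0 = x ∧ Q v, pathWeight p v) := by
  have hw : ∀ v : Fin (n + 1) → S, 0 ≤ pathWeight p v :=
    pathWeight_nonneg fun _ _ => nonneg_of_mem_rowStochastic hp
  have hle : ∀ (R : (Fin (n + 1) → S) → Prop) [DecidablePred R], μ {ω | R (fun i => ω i)} ≤
      ENNReal.ofReal (∑ v with v 0 = x ∧ R v, pathWeight p v) := by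
    intro R _
    calc μ {ω | R (fun i => ω i)}
        ≤ μ (⋃ v ∈ univ.filter R, {ω | (fun i : Fin (n + 1) => ω i) = v}) :=
          measure_mono fun ω hω => Set.mem_biUnion (by simpa using hω) rfl
      _ ≤ ∑ v with R v, μ {ω | (fun i : Fin (n + 1) => ω i) = v} :=
          measure_biUnion_finset_le _ _
      _ = ENNReal.ofReal (∑ v with v 0 = x ∧ R v, pathWeight p v) := by
          rw [ENNReal.ofReal_sum_of_nonneg fun v _ => hw v, Finset.sum_filter, Finset.sum_filter]
          refine Finset.sum_congr rfl fun v _ => ?_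
          rw [hμ.measure_cylinder_eq]
          split_ifs <;> simp_all
  have htotal : ENNReal.ofReal (∑ v with v 0 = x ∧ Q v, pathWeight p v) +
      ENNReal.ofReal (∑ v with v 0 = x ∧ ¬ Q v, pathWeight p v) = 1 := by
    rw [← ENNReal.ofReal_add (Finset.sum_nonneg fun v _ => hw v)
      (Finset.sum_nonneg fun v _ => hw v), ← Finset.filter_filter, ← Finset.filter_filter,
      Finset.sum_filter_add_sum_filter_not, ← sum_pow_apply_eq_sum_pathWeight,
      sum_row_of_mem_rowStochastic (pow_mem hp n), ENNReal.ofReal_one]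
  -- The event need not be measurable: the lower bound comes from the upper bound for the
  -- complementary event, by subadditivity.
  refine le_antisymm (hle Q) ((ENNReal.add_le_add_iff_right
    (ENNReal.ofReal_ne_top (r := ∑ v with v 0 = x ∧ ¬ Q v, pathWeight p v))).mp ?_)
  calc _ = μ Set.univ := by rw [htotal, measure_univ]
    _ ≤ μ {ω | Q (fun i => ω i)} + μ {ω | ¬ Q (fun i => ω i)} := by
        rw [← Set.union_compl_self {ω : ℕ → S | Q (fun i => ω i)}]
        exact measure_union_le _ _
    _ ≤ _ := add_le_add_right (hle fun v => ¬ Q v) _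

theorem IsMarkovChainLaw.measure_apply_eq [IsProbabilityMeasure μ]
    (hμ : IsMarkovChainLaw μ p x) (hp : p ∈ rowStochastic ℝ S) (n : ℕ) (z : S) :
    μ {ω | ω n = z} = ENNReal.ofReal ((p ^ n) x z) := by
  rw [pow_apply_eq_sum_pathWeight]
  exact hμ.measure_eq hp fun v => v (Fin.last n) = z

theorem IsMarkovChainLaw.measure_forall_ne_eq [IsProbabilityMeasure μ]
    (hμ : IsMarkovChainLaw μ p x) (hp : p ∈ rowStochastic ℝ S) (n : ℕ) (y : S) :
    μ {ω | ∀ l : Fin n, ω (l + 1) ≠ y} = ENNReal.ofReal (∑ z, ((p.updateCol y 0) ^ n) x z) := by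
  rw [sum_pow_apply_eq_sum_pathWeight,
    Finset.sum_congr rfl fun v _ => pathWeight_updateCol_zero p y v, ← Finset.sum_filter,
    Finset.filter_filter]
  exact hμ.measure_eq hp fun v => ∀ l : Fin n, v l.succ ≠ y

theorem IsMarkovChainLaw.measure_lt_returnTime_le [IsProbabilityMeasure μ]
    (hμ : IsMarkovChainLaw μ p x) (hp : p ∈ rowStochastic ℝ S) {y : S} {t : ℕ} {c : ℝ}
    (hc : ∀ w, c ≤ (p ^ t) w y) (ht : t ≠ 0) (m : ℕ) :
    μ {ω | (m : ℕ∞) < returnTime {y} ω} ≤ ENNReal.ofReal (1 - c) ^ (m / t) := by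
  have hc1 : c ≤ 1 := (hc x).trans (le_one_of_mem_rowStochastic (pow_mem hp t))
  calc μ {ω | (m : ℕ∞) < returnTime {y} ω}
      ≤ μ {ω | ∀ l : Fin (t * (m / t)), ω (l + 1) ≠ y} := by
        refine measure_mono fun ω hω l hl => ?_
        have hlt : (m : ℕ∞) < (l + 1 : ℕ) := hω.trans_le (returnTime_le l.val.succ_pos hl)
        have := Nat.mul_div_le m t
        have := Nat.cast_lt.mp hlt
        omega
    _ = ENNReal.ofReal (∑ z, ((p.updateCol y 0) ^ (t * (m / t))) x z) :=
        hμ.measure_forall_ne_eq hp _ y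
    _ ≤ ENNReal.ofReal ((1 - c) ^ (m / t)) :=
        ENNReal.ofReal_le_ofReal (sum_updateCol_zero_pow_mul_apply_le hp hc ht _ x)
    _ = ENNReal.ofReal (1 - c) ^ (m / t) := ENNReal.ofReal_pow (by linarith) _

end MarkovChainLaw

theorem expected_hitting_time_le_of_mixing_general
    {S : Type*} [Fintype S] [DecidableEq S] [MeasurableSpace S]
    (p : S → S → ℝ) (hp0 : ∀ x y, 0 ≤ p x y) (hp1 : ∀ x, ∑ y, p x y = 1)
    (P : S → Measure (ℕ → S)) (hP : ∀ x, IsProbabilityMeasure (P x))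
    (hcyl : ∀ (x : S) (γ : ℕ → S) (n : ℕ),
      P x {ω | ∀ i ≤ n, ω i = γ i} =
        if γ 0 = x then ENNReal.ofReal (∏ i ∈ Finset.range n, p (γ i) (γ (i+1))) else 0)
    (π : S → ℝ) (hπ1 : ∑ x, π x = 1)
    (ρ M : ℝ) (hρ : 0 < ρ) (hM : 0 < M)
    (hπlow : ∀ y, ρ / M ≤ π y)
    (t : ℕ) (ht : 1 ≤ t)
    (hmix : ∀ s : ℕ, t ≤ s → ∀ x : S,
      (1/2) * ∑ y, |(P x {ω | ω s = y}).toReal - π y| ≤ ρ / (2 * M)) :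
    ∀ x y : S,
      ∫⁻ ω, (returnTime {y} ω : ℝ≥0∞) ∂ P x ≤
        ENNReal.ofReal ((1 - Real.exp (-ρ / (2 * M * (t : ℝ))))⁻¹) := by
  intro x y
  set A : Matrix S S ℝ := p
  have hA : A ∈ rowStochastic ℝ S := mem_rowStochastic_iff_sum.mpr ⟨hp0, hp1⟩
  have hlaw : ∀ w, IsMarkovChainLaw (P w) A w := hcyl
  obtain ⟨c, hc⟩ : ∃ c, c = ρ / (2 * M) := ⟨_, rfl⟩
  rw [← hc] at hmix
  have hhit : ∀ w, c ≤ (A ^ t) w y := fun w => by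
    have hcoord : ∀ z, (P w {ω | ω t = z}).toReal = (A ^ t) w z := fun z => by
      rw [(hlaw w).measure_apply_eq hA, ENNReal.toReal_ofReal (pow_apply_nonneg hp0 t w z)]
    refine le_of_half_sum_abs_sub_le (g := π)
      (by rw [sum_row_of_mem_rowStochastic (pow_mem hA t), hπ1])
      (by simpa only [hcoord] using hmix t le_rfl w) ?_
    have h2c : 2 * c = ρ / M := by rw [hc]; field_simp
    exact h2c.trans_le (hπlow y)
  have hc1 : c ≤ 1 := (hhit x).trans (le_one_of_mem_rowStochastic (pow_mem hA t))
  calc ∫⁻ ω, (returnTime {y} ω : ℝ≥0∞) ∂ P x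
      ≤ ∑' m : ℕ, P x {ω | (m : ℕ∞) < returnTime {y} ω} := lintegral_le_tsum_measure_lt _ _
    _ ≤ ∑' m : ℕ, ENNReal.ofReal (1 - c) ^ (m / t) := ENNReal.tsum_le_tsum fun m =>
        (hlaw x).measure_lt_returnTime_le hA hhit (by omega) m
    _ ≤ ENNReal.ofReal ((1 - Real.exp (-(c / t)))⁻¹) :=
        tsum_ofReal_one_sub_pow_div_le (by rw [hc]; positivity) hc1 (by omega)
    _ = ENNReal.ofReal ((1 - Real.exp (-ρ / (2 * M * (t : ℝ))))⁻¹) := by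
        rw [hc, neg_div, div_div]

/-- **Expected hitting time bound via mixing.** For an ergodic Markov chain on a finite
state space with stationary distribution `π(y) ≥ ρ/M` for all `y`, and mixing time bound
`t_mix(ρ/(2M)) ≤ t`, the expected hitting time satisfies
`E_x[τ̄_y] ≤ (1 − exp(−ρ/(2Mt)))⁻¹` for any states `x, y`. -/
theorem expected_hitting_time_le_of_mixing
    {S : Type*} [Fintype S] [DecidableEq S] [Nonempty S] [MeasurableSpace S]
    (p : S → S → ℝ) (hp0 : ∀ x y, 0 ≤ p x y) (hp1 : ∀ x, ∑ y, p x y = 1)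
    (P : S → Measure (ℕ → S)) (hP : ∀ x, IsProbabilityMeasure (P x))
    (hcyl : ∀ (x : S) (γ : ℕ → S) (n : ℕ),
      P x {ω | ∀ i ≤ n, ω i = γ i} =
        if γ 0 = x then ENNReal.ofReal (∏ i ∈ Finset.range n, p (γ i) (γ (i+1))) else 0)
    (hirr : ∀ x y : S, ∃ n : ℕ, 0 < P x {ω | ω n = y})
    (π : S → ℝ) (hπ0 : ∀ x, 0 ≤ π x) (hπ1 : ∑ x, π x = 1)
    (hstat : ∀ y, ∑ x, π x * p x y = π y)
    (ρ M : ℝ) (hρ : 0 < ρ) (hM : 0 < M)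
    (hπlow : ∀ y, ρ / M ≤ π y)
    (t : ℕ) (ht : 1 ≤ t)
    (hmix : ∀ s : ℕ, t ≤ s → ∀ x : S,
      (1/2) * ∑ y, |(P x {ω | ω s = y}).toReal - π y| ≤ ρ / (2 * M)) :
    ∀ x y : S,
      ∫⁻ ω, (returnTime {y} ω : ℝ≥0∞) ∂ P x ≤
        ENNReal.ofReal ((1 - Real.exp (-ρ / (2 * M * (t : ℝ))))⁻¹) :=
  expected_hitting_time_le_of_mixing_general p hp0 hp1 P hP hcyl π hπ1 ρ M hρ hM hπlow t ht hmix
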